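/- Let k_n → ∞ and k_n/n → 0, and define a_n^{(3)} = log(n/k_n)·μ_0(log(n/k_n)) − 1. Then a_n^{(3)} ∼ −1/log(n/k_n), i.e. a_n^{(3)}·log(n/k_n) → −1. Equivalently, t·μ_0(t) − 1 ∼ −1/t as t → ∞. -/

import Mathlib

open MeasureTheory ProbabilityTheory Filter Real Topology

noncomputable section

/-- `K_ρ(λ) = ∫_1^λ u^(ρ-1) du`. -/
def Krho (ρ lam : ℝ) : ℝ := ∫ u in (1:ℝ)..lam, u ^ (ρ - 1)

/-- `μ_ρ(t) = ∫_0^∞ K_ρ(1 + x/t) e^(-x) dx`. -/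
def muRho (ρ t : ℝ) : ℝ := ∫ x in Set.Ioi (0:ℝ), Krho ρ (1 + x / t) * Real.exp (-x)

/-- `σ_ρ²(t) = ∫_0^∞ K_ρ²(1 + x/t) e^(-x) dx - μ_ρ²(t)`. -/
def sigmaRhoSq (ρ t : ℝ) : ℝ :=
  (∫ x in Set.Ioi (0:ℝ), (Krho ρ (1 + x / t)) ^ 2 * Real.exp (-x)) - (muRho ρ t) ^ 2

/-- A function is slowly varying at infinity. -/
def SlowlyVarying (l : ℝ → ℝ) : Prop :=
  ∀ c > (0:ℝ), Tendsto (fun x => l (c * x) / l x) atTop (𝓝 1)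

/-- A function is regularly varying at infinity with index `ρ`. -/
def RegularlyVarying (g : ℝ → ℝ) (ρ : ℝ) : Prop :=
  ∀ c > (0:ℝ), Tendsto (fun x => g (c * x) / g x) atTop (𝓝 (c ^ ρ))

/-- Convergence in distribution of a sequence of real random variables towards the
law `μlim`, expressed through convergence of integrals of bounded continuous functions. -/
def TendstoInDistribution {Ω : Type*} [MeasurableSpace Ω] (P : Measure Ω)
    (Z : ℕ → Ω → ℝ) (μlim : Measure ℝ) : Prop :=
  ∀ f : BoundedContinuousFunction ℝ ℝ,
    Tendsto (fun n => ∫ ω, f (Z n ω) ∂P) atTop (𝓝 (∫ x, f x ∂μlim))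

/-- Convergence to `0` in probability (`o_P(1)`). -/
def TendstoInProbabilityZero {Ω : Type*} [MeasurableSpace Ω] (P : Measure Ω)
    (Z : ℕ → Ω → ℝ) : Prop :=
  ∀ δ > (0:ℝ), Tendsto (fun n => P {ω | δ ≤ |Z n ω|}) atTop (𝓝 0)

/-! For `u ≥ 0` the second-order Taylor remainder `log (1 + u) - (u - u²/2)` lies in `[0, u³/2]`.
Integrating it at `u = x / t` against `e^{-x}`, whose moments are `∫ xⁿ e^{-x} = n!`, gives
`μ₀(t) = 1/t - 1/t² + O(t⁻³)`, hence `(t μ₀(t) - 1) t = -1 + O(1/t)`. The statement about the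
sequence is the case `t = log (n / kₙ)`, which tends to infinity because `kₙ / n → 0`. -/

lemma integrableOn_pow_mul_exp_neg (n : ℕ) :
    IntegrableOn (fun x : ℝ => x ^ n * exp (-x)) (Set.Ioi 0) := by
  refine (GammaIntegral_convergent (s := (n : ℝ) + 1) (by positivity)).congr_fun
    (fun x _ => ?_) measurableSet_Ioi
  simp only [add_sub_cancel_right, rpow_natCast, mul_comm]

lemma integral_pow_mul_exp_neg (n : ℕ) :
    ∫ x in Set.Ioi (0 : ℝ), x ^ n * exp (-x) = n.factorial := by
  rw [← Gamma_nat_eq_factorial, Gamma_eq_integral (by positivity)]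
  refine setIntegral_congr_fun measurableSet_Ioi (fun x _ => ?_)
  simp only [add_sub_cancel_right, rpow_natCast, mul_comm]

/-- Below by `2u / (u + 2) ≤ log (1 + u)`, above by `log y ≤ (y - y⁻¹) / 2`, which is
`s ≤ sinh s` at `s = log y`. -/
lemma abs_log_one_add_sub_le {u : ℝ} (hu : 0 ≤ u) :
    |log (1 + u) - (u - u ^ 2 / 2)| ≤ u ^ 3 / 2 := by
  have hlow : 2 * u / (u + 2) ≤ log (1 + u) := le_log_one_add_of_nonneg hu
  have hup : log (1 + u) ≤ ((1 + u) - (1 + u)⁻¹) / 2 := by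
    rw [← sinh_log (by positivity)]
    exact self_le_sinh_iff.2 (log_nonneg (by linarith))
  have hlow' : u - u ^ 2 / 2 ≤ 2 * u / (u + 2) := by
    rw [le_div_iff₀ (by positivity)]
    nlinarith [pow_nonneg hu 3]
  have hup' : ((1 + u) - (1 + u)⁻¹) / 2 ≤ u - u ^ 2 / 2 + u ^ 3 / 2 := by
    have h1u : (0 : ℝ) < 1 + u := by positivity
    rw [← sub_nonneg]
    have : u - u ^ 2 / 2 + u ^ 3 / 2 - ((1 + u) - (1 + u)⁻¹) / 2 = u ^ 4 / (2 * (1 + u)) := by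
      field_simp
      ring
    rw [this]
    positivity
  rw [abs_le]
  constructor <;> linarith

lemma Krho_zero {lam : ℝ} (hlam : 0 < lam) : Krho 0 lam = log lam := by
  rw [Krho, intervalIntegral.integral_congr (g := fun u => u⁻¹), integral_inv_of_pos one_pos hlam,
    div_one]
  intro u _
  simp only [zero_sub, rpow_neg_one]

lemma muRho_zero {t : ℝ} (ht : 0 < t) :
    muRho 0 t = ∫ x in Set.Ioi (0 : ℝ), log (1 + x / t) * exp (-x) :=
  setIntegral_congr_fun measurableSet_Ioi fun x (hx : 0 < x) => by
    rw [Krho_zero (by positivity)]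

lemma integrableOn_log_one_add_div_mul_exp_neg {t : ℝ} (ht : 0 < t) :
    IntegrableOn (fun x => log (1 + x / t) * exp (-x)) (Set.Ioi 0) := by
  refine ((integrableOn_pow_mul_exp_neg 1).const_mul t⁻¹).mono' (by fun_prop) ?_
  refine (ae_restrict_iff' measurableSet_Ioi).2 (Eventually.of_forall fun x (hx : 0 < x) => ?_)
  have hu : 0 ≤ x / t := by positivity
  rw [norm_mul, norm_of_nonneg (log_nonneg (by linarith)), norm_of_nonneg (exp_pos _).le, pow_one,
    ← mul_assoc, ← div_eq_inv_mul]
  gcongr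
  linarith [log_le_sub_one_of_pos (show 0 < 1 + x / t by positivity)]

lemma abs_muRho_zero_sub_le {t : ℝ} (ht : 0 < t) :
    |muRho 0 t - (1 / t - 1 / t ^ 2)| ≤ 3 / t ^ 3 := by
  have hI := integrableOn_pow_mul_exp_neg
  have hpoly_eq : (fun x => (x / t - (x / t) ^ 2 / 2) * exp (-x)) =
      fun x => t⁻¹ * (x ^ 1 * exp (-x)) - (2 * t ^ 2)⁻¹ * (x ^ 2 * exp (-x)) := by
    ext x
    field_simp
  have hpoly_int : IntegrableOn (fun x => (x / t - (x / t) ^ 2 / 2) * exp (-x)) (Set.Ioi 0) := by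
    rw [hpoly_eq]
    exact ((hI 1).const_mul _).sub ((hI 2).const_mul _)
  have hpoly :
      ∫ x in Set.Ioi (0 : ℝ), (x / t - (x / t) ^ 2 / 2) * exp (-x) = 1 / t - 1 / t ^ 2 := by
    rw [hpoly_eq, integral_sub ((hI 1).const_mul _) ((hI 2).const_mul _), integral_const_mul,
      integral_const_mul, integral_pow_mul_exp_neg, integral_pow_mul_exp_neg]
    field_simp
    norm_num
    ring
  have hcube_eq : (fun x => (x / t) ^ 3 / 2 * exp (-x)) =
      fun x => (2 * t ^ 3)⁻¹ * (x ^ 3 * exp (-x)) := by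
    ext x
    field_simp
  have hcube : ∫ x in Set.Ioi (0 : ℝ), (x / t) ^ 3 / 2 * exp (-x) = 3 / t ^ 3 := by
    rw [hcube_eq, integral_const_mul, integral_pow_mul_exp_neg]
    field_simp
    norm_num
  calc |muRho 0 t - (1 / t - 1 / t ^ 2)|
      = ‖∫ x in Set.Ioi (0 : ℝ),
          (log (1 + x / t) * exp (-x) - (x / t - (x / t) ^ 2 / 2) * exp (-x))‖ := by
        rw [integral_sub (integrableOn_log_one_add_div_mul_exp_neg ht) hpoly_int, hpoly,
          muRho_zero ht, norm_eq_abs]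
    _ ≤ ∫ x in Set.Ioi (0 : ℝ), (x / t) ^ 3 / 2 * exp (-x) := by
        refine norm_integral_le_of_norm_le (by rw [hcube_eq]; exact (hI 3).const_mul _) ?_
        refine (ae_restrict_iff' measurableSet_Ioi).2 (Eventually.of_forall fun x (hx : 0 < x) => ?_)
        rw [← sub_mul, norm_mul, norm_eq_abs, norm_of_nonneg (exp_pos _).le]
        gcongr
        exact abs_log_one_add_sub_le (by positivity)
    _ = 3 / t ^ 3 := hcube

lemma abs_mul_muRho_zero_sub_one_mul_add_one_le {t : ℝ} (ht : 0 < t) :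
    |(t * muRho 0 t - 1) * t + 1| ≤ 3 / t := by
  have hscale : (t * muRho 0 t - 1) * t + 1 = t ^ 2 * (muRho 0 t - (1 / t - 1 / t ^ 2)) := by
    field_simp
    ring
  calc |(t * muRho 0 t - 1) * t + 1| = t ^ 2 * |muRho 0 t - (1 / t - 1 / t ^ 2)| := by
        rw [hscale, abs_mul, abs_of_nonneg (by positivity)]
    _ ≤ t ^ 2 * (3 / t ^ 3) := by gcongr; exact abs_muRho_zero_sub_le ht
    _ = 3 / t := by field_simp

lemma tendsto_mul_muRho_zero_sub_one_mul :
    Tendsto (fun t : ℝ => (t * muRho 0 t - 1) * t) atTop (𝓝 (-1)) := by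
  rw [tendsto_iff_norm_sub_tendsto_zero]
  refine squeeze_zero' (Eventually.of_forall fun _ => norm_nonneg _) ?_
    ((tendsto_const_nhds (x := (3 : ℝ))).div_atTop tendsto_id)
  filter_upwards [eventually_gt_atTop 0] with t ht
  simpa only [sub_neg_eq_add, norm_eq_abs, id] using abs_mul_muRho_zero_sub_one_mul_add_one_le ht

theorem a_three_asymptotics_general
    (k : ℕ → ℕ) (hkbd : ∀ n, 2 ≤ n → 1 ≤ k n ∧ k n < n)
    (hkn : Tendsto (fun n => (k n : ℝ) / n) atTop (𝓝 0))
    (a3 : ℕ → ℝ)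
    (ha3 : ∀ n, a3 n =
      Real.log ((n : ℝ) / (k n : ℝ)) * muRho 0 (Real.log ((n : ℝ) / (k n : ℝ))) - 1) :
    Tendsto (fun n => a3 n * Real.log ((n : ℝ) / (k n : ℝ))) atTop (𝓝 (-1)) ∧
    Tendsto (fun t : ℝ => (t * muRho 0 t - 1) * t) atTop (𝓝 (-1)) := by
  have hkn_pos : ∀ᶠ n in atTop, (k n : ℝ) / n ∈ Set.Ioi 0 := by
    filter_upwards [eventually_ge_atTop 2] with n hn
    have hk : (0 : ℝ) < k n := by exact_mod_cast (hkbd n hn).1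
    exact div_pos hk (by positivity)
  have hlog : Tendsto (fun n : ℕ => log ((n : ℝ) / k n)) atTop atTop := by
    simpa only [Function.comp_def, inv_div] using
      tendsto_log_atTop.comp (tendsto_inv_nhdsGT_zero.comp (tendsto_nhdsWithin_iff.2 ⟨hkn, hkn_pos⟩))
  refine ⟨?_, tendsto_mul_muRho_zero_sub_one_mul⟩
  simpa only [ha3, Function.comp_def] using tendsto_mul_muRho_zero_sub_one_mul.comp hlog

theorem a_three_asymptotics
    (k : ℕ → ℕ) (hkbd : ∀ n, 2 ≤ n → 1 ≤ k n ∧ k n < n)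
    (hk : Tendsto (fun n => (k n : ℝ)) atTop atTop)
    (hkn : Tendsto (fun n => (k n : ℝ) / n) atTop (𝓝 0))
    (a3 : ℕ → ℝ)
    (ha3 : ∀ n, a3 n =
      Real.log ((n : ℝ) / (k n : ℝ)) * muRho 0 (Real.log ((n : ℝ) / (k n : ℝ))) - 1) :
    Tendsto (fun n => a3 n * Real.log ((n : ℝ) / (k n : ℝ))) atTop (𝓝 (-1)) ∧
    Tendsto (fun t : ℝ => (t * muRho 0 t - 1) * t) atTop (𝓝 (-1)) :=
  a_three_asymptotics_general k hkbd hkn a3 ha3
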